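/- Under Hypothesis 1, for every x ∈ ℝ^d one has a(x,T) = e^{TA} x; explicitly, ∫₀^T K(T,s) e^{(T−s)Aᵀ} U^{−1} e^{TA} x ds = e^{TA} x. -/

import Mathlib

open MeasureTheory Matrix Filter
open scoped RealInnerProductSpace

/-- The matrix exponential `e^{tA}`. -/
noncomputable def matExp {d : ℕ} (t : ℝ) (A : Matrix (Fin d) (Fin d) ℝ) :
    Matrix (Fin d) (Fin d) ℝ :=
  NormedSpace.exp (t • A)

/-- `Q_t = ∫₀ᵗ e^{sA} C e^{sAᵀ} ds`, defined entrywise. -/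
noncomputable def covQ {d : ℕ} (A C : Matrix (Fin d) (Fin d) ℝ) (t : ℝ) :
    Matrix (Fin d) (Fin d) ℝ :=
  Matrix.of fun i j => ∫ s in (0:ℝ)..t, (matExp s A * C * matExp s Aᵀ) i j

/-- `U = ∫₀ᵀ r e^{rA} C e^{rAᵀ} dr`, defined entrywise. -/
noncomputable def matU {d : ℕ} (A C : Matrix (Fin d) (Fin d) ℝ) (T : ℝ) :
    Matrix (Fin d) (Fin d) ℝ :=
  Matrix.of fun i j => ∫ r in (0:ℝ)..T, r * (matExp r A * C * matExp r Aᵀ) i j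

/-- `K(t,s) = ∫₀^{min(t,s)} e^{(t−r)A} C e^{(s−r)Aᵀ} dr`, defined entrywise. -/
noncomputable def kerK {d : ℕ} (A C : Matrix (Fin d) (Fin d) ℝ) (t s : ℝ) :
    Matrix (Fin d) (Fin d) ℝ :=
  Matrix.of fun i j => ∫ r in (0:ℝ)..(min t s), (matExp (t - r) A * C * matExp (s - r) Aᵀ) i j


section Aux
variable {d : ℕ} (A C : Matrix (Fin d) (Fin d) ℝ)

lemma matExp_continuous : Continuous fun t : ℝ => matExp t A := by
  letI : NormedRing (Matrix (Fin d) (Fin d) ℝ) := Matrix.linftyOpNormedRing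
  letI : NormedAlgebra ℝ (Matrix (Fin d) (Fin d) ℝ) := Matrix.linftyOpNormedAlgebra
  letI : NormedAlgebra ℚ (Matrix (Fin d) (Fin d) ℝ) := Matrix.linftyOpNormedAlgebra
  exact NormedSpace.exp_continuous.comp (continuous_id.smul continuous_const)

lemma matExp_add (a b : ℝ) : matExp a A * matExp b A = matExp (a + b) A := by
  rw [matExp, matExp, matExp, add_smul, Matrix.exp_add_of_commute]
  exact (Commute.refl A).smul_left a |>.smul_right b

lemma matExp_transpose (a : ℝ) : (matExp a A)ᵀ = matExp a Aᵀ := by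
  rw [matExp, matExp, ← Matrix.exp_transpose, transpose_smul]

/-- the integrand matrix `f r = e^{rA} C e^{rAᵀ}` -/
lemma cont_fM : Continuous fun r : ℝ => matExp r A * C * matExp r Aᵀ :=
  ((matExp_continuous A).matrix_mul continuous_const).matrix_mul (matExp_continuous Aᵀ)

lemma fM_posSemidef (hC : C.PosSemidef) (r : ℝ) :
    (matExp r A * C * matExp r Aᵀ).PosSemidef := by
  have := hC.mul_mul_conjTranspose_same (matExp r A)
  rwa [conjTranspose_eq_transpose_of_trivial, matExp_transpose] at this

lemma quad_nonneg (hC : C.PosSemidef) (r : ℝ) (v : Fin d → ℝ) :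
    0 ≤ v ⬝ᵥ (matExp r A * C * matExp r Aᵀ) *ᵥ v := by
  simpa using (fM_posSemidef A C hC r).dotProduct_mulVec_nonneg v

lemma quad_continuous (v : Fin d → ℝ) :
    Continuous fun r : ℝ => v ⬝ᵥ (matExp r A * C * matExp r Aᵀ) *ᵥ v :=
  (continuous_const.dotProduct ((cont_fM A C).matrix_mulVec continuous_const))

/-- swap dotProduct/mulVec with an entrywise interval integral -/
lemma dotProduct_integral_matrix {g : ℝ → Matrix (Fin d) (Fin d) ℝ} (hg : Continuous g)
    (a b : ℝ) (v : Fin d → ℝ) :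
    v ⬝ᵥ (Matrix.of fun i j => ∫ r in a..b, g r i j) *ᵥ v
      = ∫ r in a..b, v ⬝ᵥ (g r) *ᵥ v := by
  have hent : ∀ i j : Fin d, Continuous fun r => g r i j := fun i j =>
    ((continuous_apply j).comp ((continuous_apply i).comp hg))
  simp only [Matrix.mulVec, dotProduct, Matrix.of_apply]
  have h1 : ∀ i : Fin d, (∑ j, (∫ r in a..b, g r i j) * v j)
      = ∫ r in a..b, ∑ j, g r i j * v j := by
    intro i
    rw [intervalIntegral.integral_finset_sum]
    · simp_rw [intervalIntegral.integral_mul_const]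
    · exact fun j _ => ((hent i j).mul continuous_const).intervalIntegrable a b
  simp_rw [h1]
  rw [intervalIntegral.integral_finset_sum (f := fun i r => v i * ∑ j, g r i j * v j) (fun i _ => (continuous_const.mul
    (continuous_finset_sum _ (fun j _ => (hent i j).mul continuous_const))).intervalIntegrable a b)]
  simp_rw [intervalIntegral.integral_const_mul]

end Aux

section Unit
variable {d : ℕ} (A C : Matrix (Fin d) (Fin d) ℝ)

lemma covQ_posSemidef (hC : C.PosSemidef) (T : ℝ) (hT : 0 < T) :
    (covQ A C T).PosSemidef := by
  refine Matrix.PosSemidef.of_dotProduct_mulVec_nonneg ?_ ?_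
  · apply Matrix.IsHermitian.ext
    intro i j
    simp only [covQ, Matrix.of_apply, star_trivial]
    congr 1
    ext r
    simpa using (fM_posSemidef A C hC r).1.apply i j
  · intro v
    rw [star_trivial]
    rw [show (covQ A C T) = Matrix.of fun i j =>
      ∫ s in (0:ℝ)..T, (matExp s A * C * matExp s Aᵀ) i j from rfl]
    rw [dotProduct_integral_matrix (cont_fM A C)]
    simpa using intervalIntegral.integral_nonneg hT.le
      (fun r _ => quad_nonneg A C hC r v)

lemma matU_isUnit (hC : C.PosSemidef)
    (hQ : ∀ t : ℝ, 0 < t → IsUnit (covQ A C t))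
    (T : ℝ) (hT : 0 < T) : IsUnit (matU A C T) := by
  rw [← Matrix.mulVec_injective_iff_isUnit]
  have key : ∀ v : Fin d → ℝ, matU A C T *ᵥ v = 0 → v = 0 := by
    intro v hv
    set q : ℝ → ℝ := fun r => v ⬝ᵥ (matExp r A * C * matExp r Aᵀ) *ᵥ v with hq
    have hqc : Continuous q := quad_continuous A C v
    have hqn : ∀ r, 0 ≤ q r := fun r => quad_nonneg A C hC r v
    have h0 : (∫ r in (0:ℝ)..T, r * q r) = 0 := by
      have : v ⬝ᵥ matU A C T *ᵥ v = ∫ r in (0:ℝ)..T, r * q r := by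
        rw [show matU A C T = Matrix.of fun i j =>
          ∫ r in (0:ℝ)..T, (r • (matExp r A * C * matExp r Aᵀ)) i j by
            simp [matU, Matrix.smul_apply, smul_eq_mul]]
        rw [dotProduct_integral_matrix
          (show Continuous fun r : ℝ => r • (matExp r A * C * matExp r Aᵀ) from
            continuous_id.smul (cont_fM A C))]
        simp [hq, smul_mulVec, dotProduct_smul, smul_eq_mul]
      rw [hv, dotProduct_zero] at this
      exact this.symm
    -- q vanishes on Ioo 0 T
    have hIoo : ∀ r ∈ Set.Ioo (0:ℝ) T, q r = 0 := by
      intro r₀ hr₀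
      by_contra hne
      have hpos : 0 < r₀ * q r₀ := mul_pos hr₀.1 (lt_of_le_of_ne (hqn r₀) (Ne.symm hne))
      have hc : Continuous fun r : ℝ => r * q r := continuous_id.mul hqc
      have hop : IsOpen (Function.support fun r : ℝ => r * q r) := hc.isOpen_support
      have hmem : r₀ ∈ (Function.support fun r : ℝ => r * q r) ∩ Set.Ioo 0 T :=
        ⟨fun h => hpos.ne' h, hr₀⟩
      have hpos2 : 0 < ∫ r in Set.Ioc (0:ℝ) T, r * q r := by
        rw [setIntegral_pos_iff_support_of_nonneg_ae]
        · refine lt_of_lt_of_le ?_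
            (measure_mono (Set.inter_subset_inter_right _ Set.Ioo_subset_Ioc_self))
          exact (hop.inter isOpen_Ioo).measure_pos volume ⟨r₀, hmem⟩
        · exact (ae_restrict_iff' measurableSet_Ioc).mpr
            (ae_of_all _ fun r hr => mul_nonneg hr.1.le (hqn r))
        · exact (hc.intervalIntegrable 0 T).1
      rw [intervalIntegral.integral_of_le hT.le] at h0
      exact hpos2.ne' h0
    -- hence v ⬝ Q v = 0
    have hQv : v ⬝ᵥ covQ A C T *ᵥ v = 0 := by
      rw [show (covQ A C T) = Matrix.of fun i j =>
        ∫ s in (0:ℝ)..T, (matExp s A * C * matExp s Aᵀ) i j from rfl]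
      rw [dotProduct_integral_matrix (cont_fM A C)]
      rw [intervalIntegral.integral_of_le hT.le, integral_Ioc_eq_integral_Ioo]
      rw [setIntegral_congr_fun measurableSet_Ioo (g := fun _ => (0:ℝ)) (fun r hr => hIoo r hr)]
      simp
    have hQv0 : covQ A C T *ᵥ v = 0 := by
      have hps := covQ_posSemidef A C hC T hT
      have := (hps.dotProduct_mulVec_zero_iff v).mp (by rwa [star_trivial])
      exact this
    have hdet : IsUnit (covQ A C T).det := (Matrix.isUnit_iff_isUnit_det _).mp (hQ T hT)
    calc v = (1 : Matrix (Fin d) (Fin d) ℝ) *ᵥ v := (Matrix.one_mulVec v).symm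
    _ = ((covQ A C T)⁻¹ * covQ A C T) *ᵥ v := by rw [Matrix.nonsing_inv_mul _ hdet]
    _ = (covQ A C T)⁻¹ *ᵥ (covQ A C T *ᵥ v) := (Matrix.mulVec_mulVec _ _ _).symm
    _ = 0 := by rw [hQv0, Matrix.mulVec_zero]
  intro v w h
  have := key (v - w) (by rw [Matrix.mulVec_sub, h, sub_self])
  exact sub_eq_zero.mp this

end Unit

section Main
variable {d : ℕ} (A C : Matrix (Fin d) (Fin d) ℝ)

lemma cont_psi (T : ℝ) : Continuous fun r : ℝ => matExp (T - r) A * C * matExp (T - r) Aᵀ :=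
  (cont_fM A C).comp (continuous_const.sub continuous_id)

lemma integral_G (T : ℝ) (i k : Fin d) :
    (∫ s in (0:ℝ)..T, ∫ r in (0:ℝ)..s, (matExp (T - r) A * C * matExp (T - r) Aᵀ) i k)
      = matU A C T i k := by
  set φ : ℝ → ℝ := fun r => (matExp (T - r) A * C * matExp (T - r) Aᵀ) i k with hφdef
  have hφc : Continuous φ := (cont_psi A C T).matrix_elem i k
  have hG : ∀ x ∈ Set.uIcc (0:ℝ) T,
      HasDerivAt (fun u => ∫ r in (0:ℝ)..u, φ r) (φ x) x := fun x _ =>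
    intervalIntegral.integral_hasDerivAt_right (hφc.intervalIntegrable 0 x)
      (hφc.stronglyMeasurableAtFilter _ _) hφc.continuousAt
  have hv : ∀ x ∈ Set.uIcc (0:ℝ) T, HasDerivAt (fun u : ℝ => u) (1:ℝ) x :=
    fun x _ => hasDerivAt_id x
  have parts := intervalIntegral.integral_mul_deriv_eq_deriv_mul hG hv
    (hφc.intervalIntegrable 0 T) (continuous_const.intervalIntegrable 0 T)
  simp only [mul_one, intervalIntegral.integral_same, zero_mul, sub_zero] at parts
  rw [parts]
  have hsub : (∫ r in (0:ℝ)..T, r * (matExp r A * C * matExp r Aᵀ) i k)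
      = ∫ s in (0:ℝ)..T, (T - s) * φ s := by
    have h := intervalIntegral.integral_comp_sub_left (a := (0:ℝ)) (b := T)
      (fun r => r * (matExp r A * C * matExp r Aᵀ) i k) T
    simp only [sub_self, sub_zero] at h
    rw [← h]
  rw [matU, Matrix.of_apply, hsub]
  have hrw : ∀ s : ℝ, (T - s) * φ s = T * φ s - φ s * s := fun s => by ring
  simp_rw [hrw]
  rw [intervalIntegral.integral_sub (f := fun s => T * φ s) (g := fun s => φ s * s) ((continuous_const.mul hφc).intervalIntegrable _ _)
    ((hφc.mul continuous_id').intervalIntegrable _ _),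
    intervalIntegral.integral_const_mul]
  ring

lemma kerK_mul (T s : ℝ) (hs : s ∈ Set.Icc (0:ℝ) T) :
    kerK A C T s * matExp (T - s) Aᵀ
      = Matrix.of fun i k =>
          ∫ r in (0:ℝ)..s, (matExp (T - r) A * C * matExp (T - r) Aᵀ) i k := by
  have hmul : ∀ r : ℝ,
      matExp (T - r) A * C * matExp (s - r) Aᵀ * matExp (T - s) Aᵀ
        = matExp (T - r) A * C * matExp (T - r) Aᵀ := by
    intro r
    rw [mul_assoc (matExp (T - r) A * C), matExp_add]
    have : s - r + (T - s) = T - r := by ring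
    rw [this]
  ext i k
  have hmin : min T s = s := min_eq_right hs.2
  simp only [Matrix.mul_apply, kerK, Matrix.of_apply, hmin]
  have hE1 : Continuous fun r : ℝ => matExp (T - r) A :=
    (matExp_continuous A).comp (continuous_const.sub continuous_id : Continuous fun r : ℝ => T - r)
  have hE2 : Continuous fun r : ℝ => matExp (s - r) Aᵀ :=
    (matExp_continuous Aᵀ).comp (continuous_const.sub continuous_id : Continuous fun r : ℝ => s - r)
  have hent : ∀ j l : Fin d,
      Continuous fun r : ℝ => (matExp (T - r) A * C * matExp (s - r) Aᵀ) j l := fun j l =>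
    (((hE1.matrix_mul continuous_const).matrix_mul hE2)).matrix_elem j l
  calc (∑ j, (∫ r in (0:ℝ)..s, (matExp (T - r) A * C * matExp (s - r) Aᵀ) i j)
          * (matExp (T - s) Aᵀ) j k)
      = ∑ j, ∫ r in (0:ℝ)..s,
          (matExp (T - r) A * C * matExp (s - r) Aᵀ) i j * (matExp (T - s) Aᵀ) j k := by
        simp_rw [intervalIntegral.integral_mul_const]
    _ = ∫ r in (0:ℝ)..s, ∑ j,
          (matExp (T - r) A * C * matExp (s - r) Aᵀ) i j * (matExp (T - s) Aᵀ) j k :=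
        (intervalIntegral.integral_finset_sum
          (fun j _ => ((hent i j).mul continuous_const).intervalIntegrable 0 s)).symm
    _ = ∫ r in (0:ℝ)..s,
          (matExp (T - r) A * C * matExp (s - r) Aᵀ * matExp (T - s) Aᵀ) i k := by
        simp_rw [Matrix.mul_apply]
    _ = ∫ r in (0:ℝ)..s, (matExp (T - r) A * C * matExp (T - r) Aᵀ) i k := by
        simp_rw [hmul]
end Main

/-- Under Hypothesis 1, `a(x,T) = e^{TA} x`, i.e.
`∫₀ᵀ K(T,s) e^{(T−s)Aᵀ} U⁻¹ e^{TA} x ds = e^{TA} x`. -/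
theorem a_at_T (d : ℕ) (hd : 1 ≤ d) (A C : Matrix (Fin d) (Fin d) ℝ)
    (hC : C.PosSemidef)
    (hQ : ∀ t : ℝ, 0 < t → IsUnit (covQ A C t))
    (T : ℝ) (hT : 0 < T) (x : Fin d → ℝ) :
    (∫ s in (0:ℝ)..T,
        (kerK A C T s * (matExp (T - s) Aᵀ * (matU A C T)⁻¹ * matExp T A)).mulVec x)
      = (matExp T A).mulVec x := by
  have hUdet : IsUnit (matU A C T).det :=
    (Matrix.isUnit_iff_isUnit_det _).mp (matU_isUnit A C hC hQ T hT)
  set y : Fin d → ℝ := ((matU A C T)⁻¹ * matExp T A) *ᵥ x with hy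
  set G : ℝ → Matrix (Fin d) (Fin d) ℝ := fun s =>
    Matrix.of fun i k => ∫ r in (0:ℝ)..s, (matExp (T - r) A * C * matExp (T - r) Aᵀ) i k
    with hGdef
  have hstep : Set.EqOn
      (fun s => (kerK A C T s * (matExp (T - s) Aᵀ * (matU A C T)⁻¹ * matExp T A)) *ᵥ x)
      (fun s => (G s) *ᵥ y) (Set.uIcc (0:ℝ) T) := by
    intro s hs
    rw [Set.uIcc_of_le hT.le] at hs
    have hmm : kerK A C T s * (matExp (T - s) Aᵀ * (matU A C T)⁻¹ * matExp T A)
        = G s * ((matU A C T)⁻¹ * matExp T A) := by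
      simp only [hGdef]
      rw [← kerK_mul A C T s hs,
        mul_assoc (kerK A C T s) (matExp (T - s) Aᵀ) ((matU A C T)⁻¹ * matExp T A),
        ← mul_assoc (matExp (T - s) Aᵀ)]
    show (kerK A C T s * (matExp (T - s) Aᵀ * (matU A C T)⁻¹ * matExp T A)) *ᵥ x = G s *ᵥ y
    rw [hmm, hy, ← Matrix.mulVec_mulVec]
  rw [intervalIntegral.integral_congr hstep]
  have hGc : Continuous G := by
    apply continuous_matrix
    intro i k
    exact intervalIntegral.continuous_primitive
      (fun a b => (((cont_psi A C T).matrix_elem i k)).intervalIntegrable a b) 0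
  have hVc : Continuous fun s : ℝ => (G s) *ᵥ y := hGc.matrix_mulVec continuous_const
  funext i
  have happ : (∫ s in (0:ℝ)..T, (G s) *ᵥ y) i = ∫ s in (0:ℝ)..T, ((G s) *ᵥ y) i :=
    (ContinuousLinearMap.intervalIntegral_comp_comm
      (ContinuousLinearMap.proj (R := ℝ) (φ := fun _ : Fin d => ℝ) i)
      (hVc.intervalIntegrable 0 T)).symm
  rw [happ]
  have hGent : ∀ i k : Fin d, Continuous fun s : ℝ => G s i k := fun i k =>
    (hGc.matrix_elem i k)
  have hcalc : (∫ s in (0:ℝ)..T, ((G s) *ᵥ y) i) = (matU A C T *ᵥ y) i := by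
    simp only [Matrix.mulVec, dotProduct]
    rw [intervalIntegral.integral_finset_sum (f := fun k s => G s i k * y k)
      (fun k _ => ((hGent i k).mul continuous_const).intervalIntegrable 0 T)]
    congr 1
    ext k
    rw [intervalIntegral.integral_mul_const]
    congr 1
    exact integral_G A C T i k
  rw [hcalc, hy, Matrix.mulVec_mulVec, ← mul_assoc, Matrix.mul_nonsing_inv _ hUdet, one_mul]
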